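/- arXiv:2306.08897 — 3 statements merged into one kernel-verified Lean document; each statement's English description precedes it below -/
import Mathlib

section
/- Let X be a continuum and x ∈ X. If A is a subcontinuum of X with B(x) ∩ A ≠ ∅, then A ⊆ B(x) or x ∈ A. -/
open Set Metric TopologicalSpace unitInterval

variable {X : Type*} [MetricSpace X] [CompactSpace X] [ConnectedSpace X] [Nonempty X]

/-- An order arc in the hyperspace `C(X)`: a continuous map into nonempty compact
(connected-valued) subsets, strictly increasing with respect to inclusion. -/
def IsOrderArc {X : Type*} [MetricSpace X] (α : unitInterval → NonemptyCompacts X) : Prop :=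
  Continuous α ∧ (∀ t, IsConnected (α t : Set X)) ∧
    ∀ s t : unitInterval, s < t → (α s : Set X) ⊂ (α t : Set X)

/-- `B` blocks `A`: every continuous path in `2^X` from `A` to `X` meets `B`
at some time `t < 1`. -/
def Blocks {X : Type*} [MetricSpace X] (B A : Set X) : Prop :=
  ∀ γ : unitInterval → NonemptyCompacts X, Continuous γ →
    (γ 0 : Set X) = A → (γ 1 : Set X) = univ →
    ∃ t : unitInterval, t < 1 ∧ ((γ t : Set X) ∩ B).Nonempty

/-- The blocked set of a point `x`: all points `y` such that `{x}` blocks `{y}`. -/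
def BlockedSet {X : Type*} [MetricSpace X] (x : X) : Set X :=
  {y | Blocks {x} {y}}

/-- A nonblocker of singletons: a nonempty proper closed set `A` such that every
point outside `A` admits an order arc from its singleton to `X` avoiding `A`
at all times `t < 1`. -/
def IsNonBlocker {X : Type*} [MetricSpace X] (A : Set X) : Prop :=
  IsClosed A ∧ A.Nonempty ∧ A ≠ univ ∧
    ∀ x ∉ A, ∃ α : unitInterval → NonemptyCompacts X, IsOrderArc α ∧
      (α 0 : Set X) = {x} ∧ (α 1 : Set X) = univ ∧
      ∀ t : unitInterval, t < 1 → (α t : Set X) ∩ A = ∅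

open Classical in
/-- `π(x)`: the intersection of all nonblockers of singletons containing `x`,
or `X` if no such nonblocker exists. -/
noncomputable def piSet {X : Type*} [MetricSpace X] (x : X) : Set X :=
  if ∃ A : Set X, IsNonBlocker A ∧ x ∈ A then ⋂₀ {A : Set X | IsNonBlocker A ∧ x ∈ A}
  else univ

/-- The Kelley property of a continuum. -/
def KelleyContinuum (X : Type*) [MetricSpace X] : Prop :=
  ∀ ε > (0 : ℝ), ∃ δ > (0 : ℝ), ∀ p q : X, dist p q < δ →
    ∀ A : Set X, IsCompact A → IsConnected A → p ∈ A →
      ∃ B : Set X, IsCompact B ∧ IsConnected B ∧ q ∈ B ∧ hausdorffDist A B < ε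

/-- A shore set: a nonempty proper closed set which can be avoided by subcontinua
arbitrarily close (in Hausdorff distance) to the whole space. -/
def IsShoreSet {X : Type*} [MetricSpace X] (A : Set X) : Prop :=
  IsClosed A ∧ A.Nonempty ∧ A ≠ univ ∧
    ∀ ε > (0 : ℝ), ∃ B : Set X, IsCompact B ∧ IsConnected B ∧
      hausdorffDist B (univ : Set X) < ε ∧ B ∩ A = ∅

/-- A shore point: a point whose singleton is a shore set. -/
def IsShorePoint {X : Type*} [MetricSpace X] (x : X) : Prop :=
  IsShoreSet ({x} : Set X)

/-- Two points of `S` are joined by an arc lying in `S` (or are equal). -/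
def ArcIn {X : Type*} [MetricSpace X] (S : Set X) (x y : X) : Prop :=
  x = y ∨ ∃ f : unitInterval → X, Continuous f ∧ Function.Injective f ∧
    f 0 = x ∧ f 1 = y ∧ ∀ t, f t ∈ S

/-- A set is arcwise connected if any two of its points are joined by an arc in it. -/
def IsArcwiseConnected {X : Type*} [MetricSpace X] (S : Set X) : Prop :=
  ∀ x ∈ S, ∀ y ∈ S, ArcIn S x y

/-- The arc component of `x` in `S`. -/
def arcComponent {X : Type*} [MetricSpace X] (S : Set X) (x : X) : Set X :=
  {y | y ∈ S ∧ ArcIn S x y}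

/-- A continuum `K` is unicoherent if the intersection of any two subcontinua
whose union is `K` is connected. -/
def IsUnicoherent {X : Type*} [MetricSpace X] (K : Set X) : Prop :=
  ∀ A B : Set X, IsCompact A → IsConnected A → IsCompact B → IsConnected B →
    A ∪ B = K → IsConnected (A ∩ B)

/-- A dendroid: an arcwise connected, hereditarily unicoherent continuum. -/
def IsDendroid (X : Type*) [MetricSpace X] [CompactSpace X] [ConnectedSpace X]
    [Nonempty X] : Prop :=
  IsArcwiseConnected (univ : Set X) ∧
    ∀ K : Set X, IsCompact K → IsConnected K → IsUnicoherent K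

/-- A strong center: a point `p` for which there are nonempty open sets `U`, `V`
such that every arc from `U` to `V` passes through `p`. -/
def IsStrongCenter {X : Type*} [MetricSpace X] (p : X) : Prop :=
  ∃ U V : Set X, IsOpen U ∧ IsOpen V ∧ U.Nonempty ∧ V.Nonempty ∧
    ∀ f : unitInterval → X, Continuous f → Function.Injective f →
      f 0 ∈ U → f 1 ∈ V → ∃ t, f t = p

/-- A homogeneous space: any point can be mapped to any other by a self-homeomorphism. -/
def IsHomogeneous (X : Type*) [MetricSpace X] : Prop :=
  ∀ p q : X, ∃ h : X ≃ₜ X, h p = q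

/-!
Let `p ∈ B(x) ∩ A` with `x ∉ A`, and let `y ∈ A`. An order arc of subcontinua from `{p}` to `A`,
followed by `t ↦ γ t ∪ A` for any path `γ` from `{y}` to `X`, is a path from `{p}` to `X`; it
stays inside `A` until it reaches `A`, so it can meet `x` before the end only through `γ`.

The order arc comes from a maximal chain of subcontinua between `{p}` and `A`. The chain is
closed, hence compact, and a continuous strictly monotone function on the hyperspace embeds it
into `ℝ`. Its image has no gaps, because by boundary bumping two strictly nested subcontinua
always have a third one strictly between them, and maximality puts such a continuum into the
chain. So the chain is homeomorphic to a compact interval.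
-/

open Topology

theorem IsMaxChain.exists_mem_between {α : Type*} [PartialOrder α] [DenselyOrdered α]
    {M : Set α} (hM : IsMaxChain (· ≤ ·) M) {a b : α} (ha : a ∈ M) (hb : b ∈ M) (hab : a < b) :
    ∃ c ∈ M, a < c ∧ c < b := by
  obtain ⟨c, hac, hcb⟩ := exists_between hab
  by_contra! hgap
  have hchain : IsChain (· ≤ ·) (insert c M) := hM.1.insert fun d hd _ => by
    by_cases hda : d ≤ a
    · exact Or.inr (hda.trans hac.le)
    have had : a < d := hM.1.lt_of_not_ge hd ha hda
    exact Or.inl (hcb.le.trans (hM.1.le_of_not_gt hd hb (hgap d hd had)))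
  have hcM : c ∈ M := (hM.2 hchain (subset_insert c M)).symm ▸ mem_insert c M
  exact hgap c hcM hac hcb

theorem IsChain.closure {α : Type*} [TopologicalSpace α] [Preorder α] [OrderClosedTopology α]
    {s : Set α} (hs : IsChain (· ≤ ·) s) : IsChain (· ≤ ·) (closure s) := by
  have hclosed : IsClosed {p : α × α | p.1 ≤ p.2 ∨ p.2 ≤ p.1} :=
    (isClosed_le continuous_fst continuous_snd).union (isClosed_le continuous_snd continuous_fst)
  have hsub : _root_.closure s ×ˢ _root_.closure s ⊆ {p : α × α | p.1 ≤ p.2 ∨ p.2 ≤ p.1} := by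
    rw [← closure_prod_eq]
    exact hclosed.closure_subset_iff.2 fun p ⟨h₁, h₂⟩ => hs.total h₁ h₂
  exact fun a ha b hb _ => hsub (mk_mem_prod ha hb)

theorem IsCompact.ordConnected_of_exists_between {α : Type*} [ConditionallyCompleteLinearOrder α]
    [TopologicalSpace α] [OrderTopology α] {S : Set α} (hS : IsCompact S)
    (hgap : ∀ a ∈ S, ∀ b ∈ S, a < b → ∃ c ∈ S, a < c ∧ c < b) : S.OrdConnected := by
  refine ⟨fun x hx y hy z ⟨hxz, hzy⟩ => ?_⟩
  by_contra hz
  have hlo : sSup (S ∩ Iic z) ∈ S ∩ Iic z := (hS.inter_right isClosed_Iic).sSup_mem ⟨x, hx, hxz⟩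
  have hhi : sInf (S ∩ Ici z) ∈ S ∩ Ici z := (hS.inter_right isClosed_Ici).sInf_mem ⟨y, hy, hzy⟩
  have hlo_lt : sSup (S ∩ Iic z) < sInf (S ∩ Ici z) :=
    (lt_of_le_of_ne hlo.2 fun h => hz (h ▸ hlo.1)).trans_le hhi.2
  obtain ⟨c, hcS, hlo_c, hc_hi⟩ := hgap _ hlo.1 _ hhi.1 hlo_lt
  rcases le_total c z with hcz | hzc
  · exact (le_csSup (hS.inter_right isClosed_Iic).bddAbove ⟨hcS, hcz⟩).not_gt hlo_c
  · exact (csInf_le (hS.inter_right isClosed_Ici).bddBelow ⟨hcS, hzc⟩).not_gt hc_hi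

theorem IsCompact.joinedIn_of_injOn_of_ordConnected {P : Type*} [TopologicalSpace P] {K : Set P}
    (hK : IsCompact K) {f : P → ℝ} (hf : Continuous f) (hinj : InjOn f K)
    (hS : (f '' K).OrdConnected) {a b : P} (ha : a ∈ K) (hb : b ∈ K) : JoinedIn K a b := by
  have : CompactSpace K := isCompact_iff_compactSpace.1 hK
  let e : K ≃ₜ f '' K := ((hf.comp continuous_subtype_val).isClosedEmbedding
    hinj.injective).isEmbedding.toHomeomorph.trans (Homeomorph.setCongr (image_eq_range f K).symm)
  have : PathConnectedSpace (f '' K) :=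
    isPathConnected_iff_pathConnectedSpace.1 (hS.convex.isPathConnected ⟨f a, a, ha, rfl⟩)
  have : PathConnectedSpace K := e.symm.surjective.pathConnectedSpace e.symm.continuous
  exact (joinedIn_iff_joined ha hb).2 (PathConnectedSpace.joined _ _)

theorem joinedIn_Icc_of_strictMono {P : Type*} [TopologicalSpace P] [CompactSpace P]
    [PartialOrder P] [OrderClosedTopology P] [DenselyOrdered P] {f : P → ℝ} (hf : Continuous f)
    (hfm : StrictMono f) {a b : P} (hab : a ≤ b) : JoinedIn (Icc a b) a b := by
  obtain ⟨M, hM, habM⟩ := (IsChain.pair hab).exists_maxChain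
  have hMclosed : IsClosed M := (hM.2 hM.1.closure subset_closure).symm ▸ isClosed_closure
  set K := M ∩ Icc a b
  have haK : a ∈ K := ⟨habM (mem_insert a _), le_rfl, hab⟩
  have hbK : b ∈ K := ⟨habM (mem_insert_of_mem a rfl), hab, le_rfl⟩
  have hKchain : IsChain (· ≤ ·) K := hM.1.mono inter_subset_left
  have hlt : ∀ x ∈ K, ∀ y ∈ K, f x < f y → x < y := fun x hx y hy hxy =>
    hKchain.lt_of_not_ge hy hx fun hyx => (hfm.monotone hyx).not_gt hxy
  have hinj : InjOn f K := fun x hx y hy hxy => by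
    by_contra hne
    rcases hKchain hx hy hne with h | h
    · exact (hfm (h.lt_of_ne hne)).ne hxy
    · exact (hfm (h.lt_of_ne (Ne.symm hne))).ne' hxy
  have hS : (f '' K).OrdConnected := by
    refine ((hMclosed.inter isClosed_Icc).isCompact.image hf).ordConnected_of_exists_between ?_
    rintro _ ⟨x, hx, rfl⟩ _ ⟨y, hy, rfl⟩ hxy
    obtain ⟨z, hzM, hxz, hzy⟩ := hM.exists_mem_between hx.1 hy.1 (hlt x hx y hy hxy)
    exact ⟨f z, ⟨z, ⟨hzM, hx.2.1.trans hxz.le, hzy.le.trans hy.2.2⟩, rfl⟩, hfm hxz, hfm hzy⟩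
  exact ((hMclosed.inter isClosed_Icc).isCompact.joinedIn_of_injOn_of_ordConnected hf hinj hS
    haK hbK).mono inter_subset_right

theorem exists_isClopen_of_connectedComponent_subset {Y : Type*} [TopologicalSpace Y] [T2Space Y]
    [CompactSpace Y] {x : Y} {U : Set Y} (hU : IsOpen U) (h : connectedComponent x ⊆ U) :
    ∃ V, IsClopen V ∧ x ∈ V ∧ V ⊆ U := by
  have : Nonempty {s : Set Y // IsClopen s ∧ x ∈ s} := ⟨⟨univ, isClopen_univ, trivial⟩⟩
  obtain ⟨⟨V, hV, hxV⟩, hVU⟩ := exists_subset_nhds_of_isCompact'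
    (V := fun s : {s : Set Y // IsClopen s ∧ x ∈ s} => (s : Set Y))
    (fun s t => ⟨⟨s ∩ t, s.2.1.inter t.2.1, s.2.2, t.2.2⟩, inter_subset_left, inter_subset_right⟩)
    (fun s => s.2.1.isClosed.isCompact) (fun s => s.2.1.isClosed)
    (fun y hy => hU.mem_nhds (h ((connectedComponent_eq_iInter_isClopen x).symm ▸ hy)))
  exact ⟨V, hV, hxV, hVU⟩

/-- The boundary bumping theorem. -/
theorem connectedComponentIn_inter_frontier_nonempty {Y : Type*} [TopologicalSpace Y] [T2Space Y]
    [CompactSpace Y] [ConnectedSpace Y] {E : Set Y} (hE : IsClosed E) (hEu : E ≠ univ) {y : Y}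
    (hy : y ∈ E) : (connectedComponentIn E y ∩ frontier E).Nonempty := by
  by_contra! hdisj
  have : CompactSpace E := isCompact_iff_compactSpace.1 hE.isCompact
  have hsub : connectedComponent (⟨y, hy⟩ : E) ⊆ Subtype.val ⁻¹' interior E := fun z hz => by
    have hz' : (z : Y) ∈ connectedComponentIn E y :=
      connectedComponentIn_eq_image hy ▸ mem_image_of_mem _ hz
    rcases (closure_eq_interior_union_frontier E ▸ subset_closure z.2 :) with h | h
    exacts [h, absurd hdisj (nonempty_iff_ne_empty.1 ⟨z, hz', h⟩)]
  obtain ⟨V, hV, hyV, hVint⟩ := exists_isClopen_of_connectedComponent_subset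
    (isOpen_interior.preimage continuous_subtype_val) hsub
  -- `V` is clopen in `E` and lies in the interior of `E`, so its image is clopen in `Y`
  have hWclosed : IsClosed (Subtype.val '' V) := hE.isClosedMap_subtype_val V hV.isClosed
  have hWopen : IsOpen (Subtype.val '' V) := by
    obtain ⟨O, hO, rfl⟩ := isOpen_induced_iff.1 hV.isOpen
    convert hO.inter isOpen_interior using 1
    rw [Subtype.image_preimage_coe]
    exact Subset.antisymm
      (fun z hz => ⟨hz.2, hVint (show (⟨z, hz.1⟩ : E) ∈ Subtype.val ⁻¹' O from hz.2)⟩)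
      (fun z hz => ⟨interior_subset hz.2, hz.1⟩)
  rcases isClopen_iff.1 ⟨hWclosed, hWopen⟩ with h | h
  · exact (h ▸ mem_image_of_mem _ hyV : y ∈ (∅ : Set Y))
  · exact hEu (eq_univ_of_univ_subset (h ▸ image_subset_iff.2 fun z _ => z.2))

theorem exists_isCompact_isConnected_ssupset_ne_univ {Y : Type*} [TopologicalSpace Y] [T2Space Y]
    [CompactSpace Y] [ConnectedSpace Y] {B : Set Y} (hBc : IsCompact B) (hB : IsConnected B)
    (hBu : B ≠ univ) : ∃ D, IsCompact D ∧ IsConnected D ∧ B ⊂ D ∧ D ≠ univ := by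
  obtain ⟨q, hq⟩ := (ne_univ_iff_exists_notMem B).1 hBu
  obtain ⟨U, V, hU, hV, hBU, hqV, hUV⟩ :=
    SeparatedNhds.of_isCompact_isCompact hBc isCompact_singleton (disjoint_singleton_right.2 hq)
  have hqE : q ∉ closure U := fun h => (hUV.closure_left hV).ne_of_mem h (hqV rfl) rfl
  obtain ⟨b, hb⟩ := hB.nonempty
  have hbE : b ∈ closure U := subset_closure (hBU hb)
  set D := connectedComponentIn (closure U) b
  obtain ⟨z, hzD, hzfr⟩ := connectedComponentIn_inter_frontier_nonempty isClosed_closure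
    ((ne_univ_iff_exists_notMem _).2 ⟨q, hqE⟩) hbE
  have hDclosed : IsClosed D := isClosed_of_closure_subset <|
    isPreconnected_connectedComponentIn.closure.subset_connectedComponentIn
      (subset_closure (mem_connectedComponentIn hbE))
      (closure_minimal (connectedComponentIn_subset _ _) isClosed_closure)
  have hzB : z ∉ B := fun h => hzfr.2 (hU.subset_interior_closure (hBU h))
  refine ⟨D, hDclosed.isCompact, isConnected_connectedComponentIn_iff.2 hbE,
    ssubset_iff_subset_ne.2 ⟨hB.isPreconnected.subset_connectedComponentIn hb
      (hBU.trans subset_closure), fun h => hzB (h ▸ hzD)⟩,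
    (ne_univ_iff_exists_notMem _).2 ⟨q, fun h => hqE (connectedComponentIn_subset _ _ h)⟩⟩

theorem exists_isCompact_isConnected_between {α : Type*} [TopologicalSpace α] [T2Space α]
    {B C : Set α} (hBc : IsCompact B) (hB : IsConnected B) (hCc : IsCompact C)
    (hC : IsConnected C) (hBC : B ⊂ C) : ∃ D, IsCompact D ∧ IsConnected D ∧ B ⊂ D ∧ D ⊂ C := by
  have : CompactSpace C := isCompact_iff_compactSpace.1 hCc
  have : ConnectedSpace C := isConnected_iff_connectedSpace.1 hC
  have himage : Subtype.val '' (Subtype.val ⁻¹' B : Set C) = B := by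
    rw [Subtype.image_preimage_coe, inter_eq_right.2 hBC.1]
  obtain ⟨b, hb⟩ := hB.nonempty
  obtain ⟨D, hDc, hD, hBD, hDu⟩ := exists_isCompact_isConnected_ssupset_ne_univ
    (Subtype.isCompact_iff.2 (by rwa [himage]))
    ⟨⟨⟨b, hBC.1 hb⟩, hb⟩, IsInducing.subtypeVal.isPreconnected_image.1
      (by rw [himage]; exact hB.isPreconnected)⟩
    fun h => hBC.ne (by rw [← himage, h, image_univ, Subtype.range_coe])
  refine ⟨Subtype.val '' D, hDc.image continuous_subtype_val,
    hD.image _ continuous_subtype_val.continuousOn,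
    himage ▸ Subtype.val_injective.image_strictMono hBD, ?_⟩
  simpa using Subtype.val_injective.image_strictMono (ssubset_univ_iff.2 hDu)

namespace TopologicalSpace.NonemptyCompacts

section T2

variable {α : Type*} [TopologicalSpace α] [T2Space α]

instance : OrderClosedTopology (NonemptyCompacts α) where
  isClosed_le' := by
    simpa only [sup_eq_right] using isClosed_eq
      (f := fun p : NonemptyCompacts α × NonemptyCompacts α => p.1 ⊔ p.2) continuous_sup
      continuous_snd

theorem isClosed_setOf_isConnected :
    IsClosed {K : NonemptyCompacts α | IsConnected (K : Set α)} := by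
  refine isOpen_compl_iff.1 (isOpen_iff_forall_mem_open.2 fun K hK => ?_)
  obtain ⟨u, v, hu, hv, hKuv, huv, hKu, hKv⟩ : ∃ u v : Set α, IsClosed u ∧ IsClosed v ∧
      (K : Set α) ⊆ u ∪ v ∧ Disjoint u v ∧ ¬ (K : Set α) ⊆ u ∧ ¬ (K : Set α) ⊆ v := by
    simpa [IsConnected, K.nonempty,
      isPreconnected_iff_subset_of_fully_disjoint_closed K.isCompact.isClosed] using hK
  obtain ⟨U, V, hU, hV, hKU, hKV, hUV⟩ := SeparatedNhds.of_isCompact_isCompact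
    (K.isCompact.inter_right hu) (K.isCompact.inter_right hv)
    (huv.mono inter_subset_right inter_subset_right)
  refine ⟨{L | (L : Set α) ⊆ U ∪ V ∧ ((L : Set α) ∩ U).Nonempty ∧ ((L : Set α) ∩ V).Nonempty},
    fun L ⟨hLUV, hLU, hLV⟩ hL => ?_, ?_, ⟨?_, ?_, ?_⟩⟩
  · rcases isPreconnected_iff_subset_of_disjoint.1 hL.isPreconnected U V hU hV hLUV
      (by simp [hUV.inter_eq]) with h | h
    · obtain ⟨x, hxL, hxV⟩ := hLV; exact hUV.ne_of_mem (h hxL) hxV rfl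
    · obtain ⟨x, hxL, hxU⟩ := hLU; exact hUV.ne_of_mem hxU (h hxL) rfl
  · exact (isOpen_subsets_of_isOpen (hU.union hV)).inter
      ((isOpen_inter_nonempty_of_isOpen hU).inter (isOpen_inter_nonempty_of_isOpen hV))
  · intro x hx
    rcases hKuv hx with h | h
    exacts [Or.inl (hKU ⟨hx, h⟩), Or.inr (hKV ⟨hx, h⟩)]
  · obtain ⟨x, hxK, hxv⟩ := not_subset.1 hKv
    exact ⟨x, hxK, hKU ⟨hxK, (hKuv hxK).resolve_right hxv⟩⟩
  · obtain ⟨x, hxK, hxu⟩ := not_subset.1 hKu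
    exact ⟨x, hxK, hKV ⟨hxK, (hKuv hxK).resolve_left hxu⟩⟩

instance [CompactSpace α] : CompactSpace {K : NonemptyCompacts α // IsConnected (K : Set α)} :=
  isCompact_iff_compactSpace.1 isClosed_setOf_isConnected.isCompact

instance : DenselyOrdered {K : NonemptyCompacts α // IsConnected (K : Set α)} where
  dense := fun ⟨B, hB⟩ ⟨C, hC⟩ hBC => by
    obtain ⟨D, hDc, hD, hBD, hDC⟩ := exists_isCompact_isConnected_between B.isCompact hB
      C.isCompact hC (SetLike.coe_ssubset_coe.2 hBC)
    exact ⟨⟨⟨⟨D, hDc⟩, hD.nonempty⟩, hD⟩, show B < _ from SetLike.coe_ssubset_coe.1 hBD,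
      show _ < C from SetLike.coe_ssubset_coe.1 hDC⟩

end T2

section Metric

variable {α : Type*} [MetricSpace α] [CompactSpace α]

theorem exists_continuous_strictAnti :
    ∃ f : NonemptyCompacts α → ℝ, Continuous f ∧ StrictAnti f := by
  rcases isEmpty_or_nonempty α with hα | hα
  · exact ⟨fun _ => 0, continuous_const, fun K => (hα.false K.nonempty.some).elim⟩
  let g : ℕ → NonemptyCompacts α → ℝ := fun n K => (1 / 2) ^ n * infDist (denseSeq α n) K
  have hg_le : ∀ n K, ‖g n K‖ ≤ (1 / 2) ^ n * diam (univ : Set α) := fun n K => by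
    obtain ⟨k, hk⟩ := K.nonempty
    rw [Real.norm_of_nonneg (mul_nonneg (by positivity) infDist_nonneg)]
    exact mul_le_mul_of_nonneg_left ((infDist_le_dist_of_mem hk).trans
      (dist_le_diam_of_mem isBounded_of_compactSpace trivial trivial)) (by positivity)
  have hsum : Summable fun n : ℕ => (1 / 2 : ℝ) ^ n * diam (univ : Set α) :=
    summable_geometric_two.mul_right _
  have hg_sum : ∀ K, Summable (g · K) := fun K => hsum.of_norm_bounded fun n => hg_le n K
  refine ⟨fun K => ∑' n, g n K,
    continuous_tsum (fun n => continuous_const.mul (lipschitz_infDist_set _).continuous) hsum hg_le,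
    fun K L hKL => ?_⟩
  -- a point of the dense sequence close to some `b ∈ L \ K` is closer to `L` than to `K`
  obtain ⟨b, hbL, hbK⟩ := SetLike.exists_of_lt hKL
  have hr : 0 < infDist b K := (K.isCompact.isClosed.notMem_iff_infDist_pos K.nonempty).1 hbK
  obtain ⟨n, hn⟩ : ∃ n, dist b (denseSeq α n) < infDist b K / 2 :=
    Metric.denseRange_iff.1 (denseRange_denseSeq α) b _ (half_pos hr)
  refine Summable.tsum_lt_tsum (i := n) (fun m => ?_) ?_ (hg_sum L) (hg_sum K)
  · exact mul_le_mul_of_nonneg_left (infDist_le_infDist_of_subset hKL.le K.nonempty)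
      (by positivity)
  · refine mul_lt_mul_of_pos_left ?_ (by positivity)
    have h₁ : infDist (denseSeq α n) L ≤ dist b (denseSeq α n) :=
      dist_comm b (denseSeq α n) ▸ infDist_le_dist_of_mem hbL
    have h₂ : infDist b K ≤ infDist (denseSeq α n) K + dist b (denseSeq α n) :=
      infDist_le_infDist_add_dist
    linarith

theorem joinedIn_Icc_of_isConnected {K L : NonemptyCompacts α} (hK : IsConnected (K : Set α))
    (hL : IsConnected (L : Set α)) (hKL : K ≤ L) : JoinedIn (Icc K L) K L := by
  obtain ⟨f, hf, hfa⟩ := exists_continuous_strictAnti (α := α)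
  have := (joinedIn_Icc_of_strictMono (P := {M : NonemptyCompacts α // IsConnected (M : Set α)})
    (f := fun M => -f M) (hf.comp continuous_subtype_val).neg (fun _ _ h => neg_lt_neg (hfa h))
    (a := ⟨K, hK⟩) (b := ⟨L, hL⟩) hKL).map continuous_subtype_val
  exact this.mono (image_subset_iff.2 fun M hM => hM)

end Metric

end TopologicalSpace.NonemptyCompacts

theorem Blocks.of_joinedIn {α : Type*} [MetricSpace α] {S P Q : Set α} (h : Blocks S P)
    {K₀ K : NonemptyCompacts α} (hK₀ : (K₀ : Set α) = P)
    (hjoin : JoinedIn {L : NonemptyCompacts α | Disjoint (L : Set α) S} K₀ K) (hQK : Q ⊆ K) :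
    Blocks S Q := by
  intro γ hγ hγ0 hγ1
  have hγK : γ 0 ⊔ K = K := NonemptyCompacts.ext (by simp [hγ0, hQK])
  let δ : Path K₀ (γ 1 ⊔ K) := hjoin.somePath.trans
    { toFun := fun t => γ t ⊔ K, continuous_toFun := hγ.sup continuous_const,
      source' := hγK, target' := rfl }
  have hKS : Disjoint (K : Set α) S := hjoin.somePath.target ▸ hjoin.somePath_mem 1
  obtain ⟨t, ht, z, hzδ, hzS⟩ := h (fun t => δ t) δ.continuous (by simp [δ, hK₀]) (by simp [δ, hγ1])
  simp only [δ, Path.trans_apply] at hzδ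
  split_ifs at hzδ
  · exact ((hjoin.somePath_mem _).ne_of_mem hzδ hzS rfl).elim
  · rcases hzδ with hzγ | hzK
    · exact ⟨_, Subtype.mk_lt_mk.2 (by linarith [show (t : ℝ) < 1 from ht]), z, hzγ, hzS⟩
    · exact (hKS.ne_of_mem hzK hzS rfl).elim

theorem subcontinuum_meets_blocked (x : X) (A : Set X)
    (hAc : IsCompact A) (hAconn : IsConnected A)
    (hmeet : (BlockedSet x ∩ A).Nonempty) :
    A ⊆ BlockedSet x ∨ x ∈ A := by
  refine or_iff_not_imp_right.2 fun hx y hy => ?_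
  obtain ⟨p, hp, hpA⟩ := hmeet
  let A' : NonemptyCompacts X := ⟨⟨A, hAc⟩, hAconn.nonempty⟩
  have hjoin : JoinedIn (Icc {p} A') {p} A' := NonemptyCompacts.joinedIn_Icc_of_isConnected
    isConnected_singleton hAconn (singleton_subset_iff.2 hpA)
  exact Blocks.of_joinedIn hp (NonemptyCompacts.coe_singleton p)
    (hjoin.mono fun L hL => disjoint_singleton_right.2 fun h => hx (hL.2 h))
    (singleton_subset_iff.2 hy)
end

section
/- Let X be a continuum and x, y, z ∈ X such that x ∈ B(y) and y ∈ B(z). Then x ∈ B(z). (Blocking of points is transitive.) -/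
open Set Metric TopologicalSpace unitInterval

variable {X : Type*} [MetricSpace X] [CompactSpace X] [ConnectedSpace X] [Nonempty X]

/-!
Suppose a path `γ` in the hyperspace from `{x}` to `X` avoided `z` before time `1`. Then so does
its track `Γ t = ⋃_{s ≤ t} γ s`, a path of continua growing from `{x}`, and since `y` blocks `x`,
some `Γ t₀` with `t₀ < 1` contains `y`. An order arc of subcontinua runs from `{y}` up to the
continuum `Γ t₀`: a maximal chain of subcontinua between them has no jumps by boundary bumping, so
a continuous strictly monotone (Whitney-type) function maps it homeomorphically onto an interval.
Following this arc and then `Γ` from `t₀` to `1` gives a path from `{y}` to `X` that avoids `z`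
before time `1`, contradicting that `z` blocks `y`.
-/

section ConnectedComponents

variable {α : Type*} [TopologicalSpace α]

theorem exists_isClopen_subset_of_connectedComponent_subset [CompactSpace α] [T2Space α] {x : α}
    {U : Set α} (hU : IsOpen U) (h : connectedComponent x ⊆ U) :
    ∃ V, IsClopen V ∧ x ∈ V ∧ V ⊆ U := by
  rw [connectedComponent_eq_iInter_isClopen] at h
  obtain ⟨t, ht⟩ := hU.isClosed_compl.isCompact.elim_finite_subfamily_closed
    (fun V : {V : Set α // IsClopen V ∧ x ∈ V} => (V : Set α)) (fun V => V.2.1.isClosed)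
    (disjoint_iff_inter_eq_empty.1 (disjoint_compl_left_iff_subset.2 h))
  refine ⟨⋂ V ∈ t, V, isClopen_biInter_finset fun V _ => V.2.1, mem_iInter₂.2 fun V _ => V.2.2, ?_⟩
  rwa [inter_comm, ← disjoint_iff_inter_eq_empty, disjoint_compl_right_iff_subset] at ht

theorem isCompact_connectedComponentIn {s : Set α} (hs : IsCompact s) (x : α) :
    IsCompact (connectedComponentIn s x) := by
  by_cases hx : x ∈ s
  · have := isCompact_iff_compactSpace.1 hs
    rw [connectedComponentIn_eq_image hx]
    exact isClosed_connectedComponent.isCompact.image continuous_subtype_val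
  · rw [connectedComponentIn_eq_empty hx]
    exact isCompact_empty

/-- Boundary bumping. -/
theorem IsPreconnected.exists_mem_connectedComponentIn_notMem [T2Space α] {B E U : Set α}
    (hB : IsPreconnected B) (hBc : IsCompact B) (hE : IsClosed E) (hU : IsOpen U) (hUE : U ⊆ E)
    {x : α} (hx : x ∈ B ∩ E) (hBU : ¬B ⊆ U) :
    ∃ p ∈ _root_.connectedComponentIn (B ∩ E) x, p ∉ U := by
  by_contra! hDU
  have hK : IsCompact (B ∩ E) := hBc.inter_right hE
  have := isCompact_iff_compactSpace.1 hK
  obtain ⟨V, hV, hxV, hVU⟩ := exists_isClopen_subset_of_connectedComponent_subset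
    (hU.preimage continuous_subtype_val) fun q hq =>
      hDU q (connectedComponentIn_eq_image hx ▸ mem_image_of_mem _ hq)
  have hclosed := hK.isClosed.isClosedEmbedding_subtypeVal.isClosedMap
  obtain ⟨b, hbB, hbU⟩ := not_subset.1 hBU
  -- `B` would be the union of the disjoint closed sets `V` and `(B \ U) ∪ ((B ∩ E) \ V)`.
  obtain ⟨q, -, hqV, hqW⟩ := isPreconnected_closed_iff.1 hB (Subtype.val '' V)
    ((B \ U) ∪ Subtype.val '' Vᶜ) (hclosed _ hV.isClosed)
    ((hBc.isClosed.sdiff hU).union (hclosed _ hV.compl.isClosed))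
    (fun p hp => by
      by_cases hpU : p ∈ U
      · by_cases hpV : (⟨p, hp, hUE hpU⟩ : ↥(B ∩ E)) ∈ V
        · exact Or.inl ⟨_, hpV, rfl⟩
        · exact Or.inr (Or.inr ⟨_, hpV, rfl⟩)
      · exact Or.inr (Or.inl ⟨hp, hpU⟩))
    ⟨x, hx.1, ⟨x, hx⟩, hxV, rfl⟩ ⟨b, hbB, Or.inl ⟨hbB, hbU⟩⟩
  obtain ⟨q', hq'V, rfl⟩ := hqV
  rcases hqW with ⟨-, hqU⟩ | ⟨q'', hq''V, hq''⟩
  · exact hqU (hVU hq'V)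
  · exact hq''V (Subtype.ext hq'' ▸ hq'V)

end ConnectedComponents

theorem IsCompact.ordConnected_of_exists_between_s5 {α : Type*} [LinearOrder α] [TopologicalSpace α]
    [OrderClosedTopology α] {s : Set α} (hs : IsCompact s)
    (h : ∀ a ∈ s, ∀ b ∈ s, a < b → ∃ c ∈ s, a < c ∧ c < b) : s.OrdConnected := by
  refine ⟨fun a ha b hb v hv => ?_⟩
  by_contra hvs
  obtain ⟨a', ⟨ha's, ha'v⟩, ha'max⟩ := (hs.inter_right isClosed_Iic).exists_isGreatest ⟨a, ha, hv.1⟩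
  obtain ⟨b', ⟨hb's, hb'v⟩, hb'min⟩ := (hs.inter_right isClosed_Ici).exists_isLeast ⟨b, hb, hv.2⟩
  have ha'v : a' < v := lt_of_le_of_ne ha'v fun h => hvs (h ▸ ha's)
  obtain ⟨c, hc, ha'c, hcb'⟩ := h a' ha's b' hb's (ha'v.trans_le hb'v)
  rcases le_total c v with hcv | hvc
  · exact (ha'max ⟨hc, hcv⟩).not_gt ha'c
  · exact (hb'min ⟨hc, hvc⟩).not_gt hcb'

theorem StrictMono.pathConnectedSpace {α : Type*} [TopologicalSpace α] [CompactSpace α]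
    [LinearOrder α] [DenselyOrdered α] [Nonempty α] {f : α → ℝ} (hf : StrictMono f)
    (hfc : Continuous f) : PathConnectedSpace α := by
  have hord : (range f).OrdConnected := (isCompact_range hfc).ordConnected_of_exists_between_s5 <| by
    rintro _ ⟨a, rfl⟩ _ ⟨b, rfl⟩ hab
    obtain ⟨c, hac, hcb⟩ := exists_between (hf.lt_iff_lt.1 hab)
    exact ⟨f c, mem_range_self c, hf hac, hf hcb⟩
  have := isPathConnected_iff_pathConnectedSpace.1 (hord.convex.isPathConnected (range_nonempty f))
  exact (hfc.isClosedEmbedding hf.injective).isEmbedding.toHomeomorph.symm.surjective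
    |>.pathConnectedSpace (Homeomorph.continuous _)

namespace Path

variable {α : Type*} [TopologicalSpace α] {a b c : α} {S : Set α}

theorem trans_apply_mem_of_lt_one {p : Path a b} {q : Path b c} (hp : ∀ t, p t ∈ S)
    (hq : ∀ t < 1, q t ∈ S) {t : I} (ht : t < 1) : p.trans q t ∈ S := by
  rw [trans_apply]
  split_ifs
  · exact hp _
  · refine hq _ (Subtype.coe_lt_coe.1 ?_)
    have : (t : ℝ) < 1 := ht
    change 2 * (t : ℝ) - 1 < 1
    linarith

theorem subpath_apply_mem_of_lt_one {p : Path a b} (hp : ∀ t < 1, p t ∈ S) {t₀ : I}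
    (ht₀ : t₀ < 1) : ∀ t < 1, p.subpath t₀ 1 t ∈ S := by
  intro t ht
  refine hp _ (Subtype.coe_lt_coe.1 ?_)
  have h₀ : (t₀ : ℝ) < 1 := ht₀
  have h₁ : (t : ℝ) < 1 := ht
  change (1 - (t : ℝ)) * t₀ + t * 1 < 1
  nlinarith

end Path

namespace TopologicalSpace.NonemptyCompacts

section Topological

variable {α : Type*} [TopologicalSpace α]

theorem isClosed_setOf_mem [T1Space α] (x : α) : IsClosed {K : NonemptyCompacts α | x ∈ K} := by
  simpa using isClosed_inter_nonempty_of_isClosed (isClosed_singleton (x := x))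

theorem isClosed_setOf_superset [T1Space α] (s : Set α) :
    IsClosed {K : NonemptyCompacts α | s ⊆ K} := by
  convert isClosed_biInter fun x (_ : x ∈ s) => isClosed_setOf_mem (α := α) x using 1
  ext K
  simp [subset_def]

theorem isClosed_setOf_le_or_le [T2Space α] (L : NonemptyCompacts α) :
    IsClosed {K : NonemptyCompacts α | K ≤ L ∨ L ≤ K} :=
  (isClosed_subsets_of_isClosed L.isCompact.isClosed).union (isClosed_setOf_superset (L : Set α))

theorem isClosed_setOf_isPreconnected [T2Space α] :
    IsClosed {K : NonemptyCompacts α | IsPreconnected (K : Set α)} := by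
  refine isOpen_compl_iff.1 (isOpen_iff_forall_mem_open.2 fun K hK => ?_)
  obtain ⟨u, v, hu, hv, hKuv, huv, hKu, hKv⟩ : ∃ u v : Set α, IsClosed u ∧ IsClosed v ∧
      (K : Set α) ⊆ u ∪ v ∧ Disjoint u v ∧ ¬(K : Set α) ⊆ u ∧ ¬(K : Set α) ⊆ v := by
    simpa [isPreconnected_iff_subset_of_fully_disjoint_closed K.isCompact.isClosed] using hK
  obtain ⟨U, V, hU, hV, huU, hvV, hUV⟩ := SeparatedNhds.of_isCompact_isCompact
    (K.isCompact.inter_right hu) (K.isCompact.inter_right hv)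
    (huv.mono inter_subset_right inter_subset_right)
  obtain ⟨p, hpK, hpv⟩ := not_subset.1 hKv
  obtain ⟨q, hqK, hqu⟩ := not_subset.1 hKu
  have hKUV : (K : Set α) ⊆ U ∪ V := fun p hp =>
    (hKuv hp).imp (fun h => huU ⟨hp, h⟩) (fun h => hvV ⟨hp, h⟩)
  have hKU : ((K : Set α) ∩ U).Nonempty := ⟨p, hpK, huU ⟨hpK, (hKuv hpK).resolve_right hpv⟩⟩
  have hKV : ((K : Set α) ∩ V).Nonempty := ⟨q, hqK, hvV ⟨hqK, (hKuv hqK).resolve_left hqu⟩⟩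
  refine ⟨{L | (L : Set α) ⊆ U ∪ V} ∩ {L | ((L : Set α) ∩ U).Nonempty} ∩
      {L | ((L : Set α) ∩ V).Nonempty}, fun L ⟨⟨hLUV, hLU⟩, hLV⟩ hL => ?_,
    ((isOpen_subsets_of_isOpen (hU.union hV)).inter (isOpen_inter_nonempty_of_isOpen hU)).inter
      (isOpen_inter_nonempty_of_isOpen hV), ⟨⟨hKUV, hKU⟩, hKV⟩⟩
  obtain ⟨r, -, hrU, hrV⟩ := hL U V hU hV hLUV hLU hLV
  exact hUV.le_bot ⟨hrU, hrV⟩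

def track (γ : C(I, NonemptyCompacts α)) (t : I) : NonemptyCompacts α where
  carrier := ⋃ s ∈ Iic t, (γ s : Set α)
  isCompact' := by
    simpa only [biUnion_image] using isCompact_biUnion_coe_of_isCompact
      (isClosed_Iic.isCompact.image γ.continuous)
  nonempty' := (γ t).nonempty.mono
    (subset_biUnion_of_mem (u := fun s => (γ s : Set α)) (mem_Iic.2 le_rfl))

theorem mem_track {γ : C(I, NonemptyCompacts α)} {t : I} {p : α} :
    p ∈ track γ t ↔ ∃ s ≤ t, p ∈ γ s := by
  change p ∈ ⋃ s ∈ Iic t, (γ s : Set α) ↔ _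
  simp only [mem_iUnion₂, mem_Iic, exists_prop, SetLike.mem_coe]

theorem le_track (γ : C(I, NonemptyCompacts α)) (t : I) : γ t ≤ track γ t :=
  fun _ hp => mem_track.2 ⟨t, le_rfl, hp⟩

theorem track_zero (γ : C(I, NonemptyCompacts α)) : track γ 0 = γ 0 := by
  refine le_antisymm (fun p hp => ?_) (le_track γ 0)
  obtain ⟨s, hs, hp⟩ := mem_track.1 hp
  rwa [le_antisymm hs nonneg'] at hp

theorem isPreconnected_track {γ : C(I, NonemptyCompacts α)} (h₀ : IsPreconnected (γ 0 : Set α))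
    (t : I) : IsPreconnected (track γ t : Set α) :=
  let := TopologicalSpace.vietoris α
  vietoris.isPreconnected_biUnion _root_.isPreconnected_Iic
    (continuous_coe.comp γ.continuous).continuousOn ⟨0, nonneg', h₀⟩

def subcontinuaIcc (K L : NonemptyCompacts α) : Set (NonemptyCompacts α) :=
  {M | IsPreconnected (M : Set α) ∧ K ≤ M ∧ M ≤ L}

theorem isClosed_subcontinuaIcc [T2Space α] (K L : NonemptyCompacts α) :
    IsClosed (subcontinuaIcc K L) :=
  isClosed_setOf_isPreconnected.inter <| (isClosed_setOf_superset (K : Set α)).inter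
    (isClosed_subsets_of_isClosed L.isCompact.isClosed)

theorem isClosed_flag [T2Space α] {S : Set (NonemptyCompacts α)} (F : Flag S) :
    IsClosed (F : Set S) := by
  have : (F : Set S) = ⋂ M ∈ F, {N | N ≤ M ∨ M ≤ N} := by
    ext N
    simpa using Flag.mem_iff_forall_le_or_ge (s := F) (a := N)
  rw [this]
  exact isClosed_biInter fun M _ => (isClosed_setOf_le_or_le M.1).preimage continuous_subtype_val

end Topological

section Metric

variable {α : Type*} [MetricSpace α]

theorem continuous_track (γ : C(I, NonemptyCompacts α)) : Continuous (track γ) := by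
  refine Metric.continuous_iff.2 fun t ε hε => ?_
  obtain ⟨δ, hδ, hγδ⟩ := Metric.uniformContinuous_iff.1
    (CompactSpace.uniformContinuous_of_continuous γ.continuous) (ε / 2) (half_pos hε)
  have hclose : ∀ {t t' : I}, dist t t' < δ →
      ∀ p ∈ track γ t, ∃ q ∈ track γ t', dist p q ≤ ε / 2 := by
    intro t t' htt' p hp
    obtain ⟨s, hst, hps⟩ := mem_track.1 hp
    rcases le_total s t' with hst' | hts
    · exact ⟨p, mem_track.2 ⟨s, hst', hps⟩, by simpa using (half_pos hε).le⟩
    · have hdist : dist s t' < δ :=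
        (Real.dist_right_le_of_mem_uIcc (Icc_subset_uIcc' ⟨hts, hst⟩)).trans_lt htt'
      obtain ⟨q, hq, hpq⟩ :=
        exists_dist_lt_of_hausdorffDist_lt hps (hγδ hdist) (edist_ne_top (γ s) (γ t'))
      exact ⟨q, le_track γ t' hq, hpq.le⟩
  exact ⟨δ, hδ, fun t' ht' => (hausdorffDist_le_of_mem_dist (half_pos hε).le (hclose ht')
    (hclose (by rwa [dist_comm]))).trans_lt (half_lt_self hε)⟩

theorem exists_continuous_strictMono [CompactSpace α] [Nonempty α] :
    ∃ μ : NonemptyCompacts α → ℝ, Continuous μ ∧ StrictMono μ := by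
  obtain ⟨u, hu⟩ := exists_dense_seq α
  set w : ℕ → NonemptyCompacts α → ℝ := fun n K => (1 / 2) ^ n * infDist (u n) K
  have hw : ∀ n K, ‖w n K‖ ≤ (1 / 2) ^ n * diam (univ : Set α) := fun n K => by
    obtain ⟨p, hp⟩ := K.nonempty
    rw [Real.norm_of_nonneg (mul_nonneg (by positivity) infDist_nonneg)]
    gcongr
    exact (infDist_le_dist_of_mem hp).trans
      (dist_le_diam_of_mem isCompact_univ.isBounded (mem_univ _) (mem_univ _))
  have hsum : ∀ K, Summable (w · K) := fun K =>
    .of_norm_bounded (summable_geometric_two.mul_right _) (hw · K)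
  refine ⟨fun K => -∑' n, w n K, (continuous_tsum (fun n => continuous_const.mul
    (lipschitz_infDist_set (u n)).continuous) (summable_geometric_two.mul_right _) hw).neg,
    StrictAnti.neg fun K L hKL => ?_⟩
  obtain ⟨p, hpL, hpK⟩ := SetLike.exists_of_lt hKL
  have hδ : 0 < infDist p K := (K.isCompact.isClosed.notMem_iff_infDist_pos K.nonempty).1 hpK
  obtain ⟨n, hn⟩ := hu.exists_dist_lt p (half_pos hδ)
  refine (hsum L).tsum_lt_tsum (i := n) (fun m => ?_) ?_ (hsum K)
  · exact mul_le_mul_of_nonneg_left (infDist_le_infDist_of_subset hKL.le K.nonempty)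
      (by positivity)
  · refine mul_lt_mul_of_pos_left ?_ (by positivity)
    have := infDist_le_infDist_add_dist (x := p) (y := u n) (s := (K : Set α))
    linarith [infDist_le_dist_of_mem (x := u n) hpL, dist_comm p (u n)]

theorem exists_isPreconnected_lt_lt {A B : NonemptyCompacts α} (hA : IsPreconnected (A : Set α))
    (hB : IsPreconnected (B : Set α)) (hAB : A < B) :
    ∃ D : NonemptyCompacts α, IsPreconnected (D : Set α) ∧ A < D ∧ D < B := by
  obtain ⟨b, hbB, hbA⟩ := SetLike.exists_of_lt hAB
  obtain ⟨a, ha⟩ := A.nonempty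
  set δ := infDist b A / 2 with hδ_def
  have hδ : 0 < δ := half_pos ((A.isCompact.isClosed.notMem_iff_infDist_pos A.nonempty).1 hbA)
  set E := {p | infDist p (A : Set α) ≤ δ}
  have hE : IsClosed E := isClosed_le (continuous_infDist_pt _) continuous_const
  have hAE : (A : Set α) ⊆ B ∩ E := fun p hp =>
    ⟨hAB.le hp, by simpa [E, infDist_zero_of_mem hp] using hδ.le⟩
  have hbE : b ∉ E := fun hb => (show infDist b A ≤ δ from hb).not_gt (by linarith)
  -- boundary bumping: the component of `a` in `B ∩ E` leaves the open `δ`-neighbourhood of `A`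
  obtain ⟨p, hpD, hpU⟩ := hB.exists_mem_connectedComponentIn_notMem B.isCompact hE
    (isOpen_lt (continuous_infDist_pt _) continuous_const) (fun _ (h : _ < δ) => h.le)
    (hAE ha) (fun h => hbE (show infDist b A < δ from h hbB).le)
  have hpA : p ∉ A := fun hpA => hpU (by simpa [infDist_zero_of_mem hpA] using hδ)
  refine ⟨⟨⟨_, isCompact_connectedComponentIn (B.isCompact.inter_right hE) a⟩,
    ⟨a, mem_connectedComponentIn (hAE ha)⟩⟩, isPreconnected_connectedComponentIn,
    SetLike.lt_iff_le_and_exists.2 ⟨hA.subset_connectedComponentIn ha hAE, p, hpD, hpA⟩,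
    SetLike.lt_iff_le_and_exists.2 ⟨fun q hq => (connectedComponentIn_subset _ _ hq).1, b, hbB,
      fun hbD => hbE (connectedComponentIn_subset _ _ hbD).2⟩⟩

theorem denselyOrdered_flag {K L : NonemptyCompacts α} (F : Flag (subcontinuaIcc K L)) :
    DenselyOrdered F := by
  refine ⟨fun A B hAB => ?_⟩
  by_contra! hgap
  have hsplit : ∀ N ∈ F, N ≤ A.1 ∨ B.1 ≤ N := by
    intro N hN
    rcases F.le_or_le hN A.2 with hNA | hAN
    · exact Or.inl hNA
    rcases F.le_or_le B.2 hN with hBN | hNB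
    · exact Or.inr hBN
    rcases hAN.lt_or_eq with hAN | rfl
    · rcases hNB.lt_or_eq with hNB | rfl
      · exact (hgap ⟨N, hN⟩ hAN hNB).elim
      · exact Or.inr le_rfl
    · exact Or.inl le_rfl
  obtain ⟨D, hD, hAD, hDB⟩ := exists_isPreconnected_lt_lt A.1.2.1 B.1.2.1 hAB
  let D' : subcontinuaIcc K L := ⟨D, hD, A.1.2.2.1.trans hAD.le, hDB.le.trans B.1.2.2.2⟩
  have hD' : D' ∈ F := Flag.mem_iff_forall_le_or_ge.2 fun N hN =>
    (hsplit N hN).symm.imp (fun h => hDB.le.trans h) (fun h => h.trans hAD.le)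
  exact hgap ⟨D', hD'⟩ hAD hDB

theorem joinedIn_subcontinuaIcc [CompactSpace α] {K L : NonemptyCompacts α}
    (hK : IsPreconnected (K : Set α)) (hL : IsPreconnected (L : Set α)) (hKL : K ≤ L) :
    JoinedIn (subcontinuaIcc K L) K L := by
  classical
  have : Nonempty α := ⟨K.nonempty.some⟩
  obtain ⟨μ, hμc, hμ⟩ := exists_continuous_strictMono (α := α)
  let bot : subcontinuaIcc K L := ⟨K, hK, le_rfl, hKL⟩
  let top : subcontinuaIcc K L := ⟨L, hL, hKL, le_rfl⟩
  obtain ⟨F, hbot⟩ := Flag.exists_mem bot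
  have htop : top ∈ F := Flag.mem_iff_forall_le_or_ge.2 fun N _ => Or.inr N.2.2.2
  have : CompactSpace (subcontinuaIcc K L) :=
    isCompact_iff_compactSpace.1 (isClosed_subcontinuaIcc K L).isCompact
  have : CompactSpace F := isCompact_iff_compactSpace.1 (isClosed_flag F).isCompact
  have : Nonempty F := ⟨⟨bot, hbot⟩⟩
  have : DenselyOrdered F := denselyOrdered_flag F
  have : PathConnectedSpace F := StrictMono.pathConnectedSpace (f := fun N : F => μ N.1.1)
    (fun _ _ h => hμ h) (hμc.comp (continuous_subtype_val.comp continuous_subtype_val))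
  obtain ⟨p⟩ := PathConnectedSpace.joined (⟨bot, hbot⟩ : F) ⟨top, htop⟩
  exact ⟨p.map (continuous_subtype_val.comp continuous_subtype_val), fun t => (p t).1.2⟩

end Metric

end TopologicalSpace.NonemptyCompacts

open TopologicalSpace.NonemptyCompacts in
theorem Blocks.trans {α : Type*} [MetricSpace α] [CompactSpace α] {A Z : Set α} {y : α}
    (h₁ : Blocks {y} A) (hA : IsPreconnected A) (h₂ : Blocks Z {y}) : Blocks Z A := by
  intro γ hγ hγ0 hγ1
  by_contra! hZ
  set S := {K : NonemptyCompacts α | Disjoint (K : Set α) Z}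
  let Γ : Path (track ⟨γ, hγ⟩ 0) (track ⟨γ, hγ⟩ 1) :=
    ⟨⟨track ⟨γ, hγ⟩, continuous_track _⟩, rfl, rfl⟩
  have hΓS : ∀ t < 1, Γ t ∈ S := fun t ht => disjoint_left.2 fun p hp hpZ => by
    obtain ⟨s, hst, hps⟩ := mem_track.1 hp
    exact (hZ s (hst.trans_lt ht)).subset ⟨hps, hpZ⟩
  have hΓ1 : (Γ 1 : Set α) = univ := by
    rw [← univ_subset_iff, ← hγ1]
    exact le_track ⟨γ, hγ⟩ 1
  obtain ⟨t₀, ht₀, hyΓ⟩ := h₁ Γ Γ.continuous (by simp [Γ, track_zero, hγ0]) hΓ1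
  have hy : {y} ≤ Γ t₀ := by
    rw [← SetLike.coe_subset_coe, coe_singleton, singleton_subset_iff]
    simpa using hyΓ
  obtain ⟨β, hβ⟩ := joinedIn_subcontinuaIcc isPreconnected_singleton
    (isPreconnected_track (by simpa [hγ0] using hA) t₀) hy
  obtain ⟨s, hs, hsZ⟩ :=
    h₂ (β.trans (Γ.subpath t₀ 1)) (Path.continuous _) (by simp) (by simpa using hΓ1)
  have hsS : β.trans (Γ.subpath t₀ 1) s ∈ S := Path.trans_apply_mem_of_lt_one
    (fun t => Disjoint.mono_left (show (β t : Set α) ⊆ Γ t₀ from (hβ t).2.2) (hΓS t₀ ht₀))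
    (Path.subpath_apply_mem_of_lt_one hΓS ht₀) hs
  exact not_disjoint_iff_nonempty_inter.2 hsZ hsS

theorem blocked_transitive (x y z : X) (hxy : x ∈ BlockedSet y)
    (hyz : y ∈ BlockedSet z) : x ∈ BlockedSet z :=
  Blocks.trans hxy isPreconnected_singleton hyz
end

section
/- If X is a dendroid possessing a strong center and A is a subcontinuum of X, then A is a connected nonblocker of singletons if and only if A has empty interior and X − A is arcwise connected. -/
open Set Metric TopologicalSpace unitInterval

variable {X : Type*} [MetricSpace X] [CompactSpace X] [ConnectedSpace X] [Nonempty X]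

/-!
If `A` is a nonblocker, fix `x ∉ A` and an order arc `α` from `{x}` to `X` avoiding `A` before
time `1`. As `t → 1`, `α t` meets every nonempty open set, so `A` has empty interior; moreover
`α t` then meets both open sets `U`, `V` of a strong center `p`, and an arc inside the continuum
`α t` from `U` to `V` passes through `p`. Two such continua, through `x` and through `y`, meet
at `p`, and their union is a continuum in `X − A` containing an arc from `x` to `y`.

Conversely, join `x` inside `X − A` by paths `γ n` to a dense sequence of `X − A`, and let
`K t` be the closure of the union of the initial pieces of the `γ n` swept by time `t`, the path
`γ n` being swept during a time interval accumulating at `1`. Before any time `t < 1` only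
finitely many paths have started, so `K` is a continuous increasing path in `C(X)` from `{x}`
to `X` avoiding `A` before time `1`. Reparametrizing `K` by the values of a strictly monotone
continuous functional on the hyperspace makes it strictly increasing, i.e. an order arc.
-/

open Filter Topology

instance unitInterval.nhdsLT_one_neBot : NeBot (𝓝[<] (1 : I)) :=
  nhdsLT_neBot_of_exists_lt ⟨0, zero_lt_one⟩

theorem Dense.exists_denseRange_forall_mem {X : Type*} [TopologicalSpace X] [Nonempty X]
    {s : Set X} [SeparableSpace s] (hs : Dense s) :
    ∃ y : ℕ → X, DenseRange y ∧ ∀ n, y n ∈ s := by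
  obtain ⟨t, hts, htc, htd⟩ := hs.exists_countable_dense_subset
  obtain ⟨y, rfl⟩ := htc.exists_eq_range htd.nonempty
  exact ⟨y, htd, fun n => hts (mem_range_self n)⟩

theorem exists_mem_mem_ne {X : Type*} [TopologicalSpace X] [T1Space X] [ConnectedSpace X]
    [Nontrivial X] {U V : Set X} (hU : IsOpen U) (hUne : U.Nonempty) (hVne : V.Nonempty) :
    ∃ u ∈ U, ∃ v ∈ V, u ≠ v := by
  obtain ⟨u, hu⟩ := hUne
  obtain ⟨v, hv⟩ := hVne
  obtain ⟨u', hu', hne⟩ := (infinite_of_mem_nhds u (hU.mem_nhds hu)).nontrivial.exists_ne v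
  exact ⟨u', hu', v, hv, hne⟩

namespace TopologicalSpace.NonemptyCompacts

section Topological

variable {X α : Type*} [TopologicalSpace X]

theorem eventually_inter_nonempty {f : α → NonemptyCompacts X} {l : Filter α}
    {K : NonemptyCompacts X} (hf : Tendsto f l (𝓝 K)) {U : Set X} (hU : IsOpen U)
    (hKU : ((K : Set X) ∩ U).Nonempty) :
    ∀ᶠ a in l, ((f a : Set X) ∩ U).Nonempty :=
  hf.eventually ((isOpen_inter_nonempty_of_isOpen hU).mem_nhds hKU)

theorem tendsto_nhds_top_iff [CompactSpace X] [Nonempty X] {f : α → NonemptyCompacts X}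
    {l : Filter α} : Tendsto f l (𝓝 ⊤) ↔
      ∀ U : Set X, IsOpen U → U.Nonempty → ∀ᶠ a in l, ((f a : Set X) ∩ U).Nonempty := by
  refine ⟨fun h U hU hne => eventually_inter_nonempty h hU (by simpa using hne), fun h => ?_⟩
  rw [isTopologicalBasis.nhds_hasBasis.tendsto_right_iff]
  rintro _ ⟨⟨u, ⟨hu, -, huo⟩, rfl⟩, htop_sub, htop_meets⟩
  filter_upwards [(eventually_all_finite hu).2 fun U hU =>
    h U (huo U hU) (by simpa using htop_meets U hU)] with a ha
  exact ⟨(subset_univ _).trans (by simpa using htop_sub), ha⟩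

end Topological

theorem exists_continuous_strictMono_s12 {X : Type*} [MetricSpace X] [SeparableSpace X]
    [Nonempty X] :
    ∃ w : NonemptyCompacts X → ℝ, Continuous w ∧ StrictMono w := by
  obtain ⟨y, hy⟩ := exists_dense_seq X
  set f : ℕ → NonemptyCompacts X → ℝ := fun n K =>
    (1 / 2 : ℝ) ^ n * min 1 (infDist (y n) K)
  have hf0 n K : 0 ≤ f n K := mul_nonneg (by positivity) (le_min zero_le_one infDist_nonneg)
  have hf1 n K : f n K ≤ (1 / 2) ^ n := mul_le_of_le_one_right (by positivity) (min_le_left _ _)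
  have hsum K : Summable (f · K) :=
    summable_geometric_two.of_nonneg_of_le (hf0 · K) (hf1 · K)
  have hanti n : Antitone (f n) := fun K L hKL => mul_le_mul_of_nonneg_left
    (min_le_min_left _ (infDist_le_infDist_of_subset hKL K.nonempty)) (by positivity)
  refine ⟨fun K => -∑' n, f n K, (continuous_tsum (fun n => ?_) summable_geometric_two
    fun n K => ?_).neg, fun K L hKL => neg_lt_neg ?_⟩
  · exact continuous_const.mul (continuous_const.min (lipschitz_infDist_set (y n)).continuous)
  · rw [Real.norm_of_nonneg (hf0 n K)]
    exact hf1 n K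
  -- a point of `L \ K` is approximated by some `y n`, which is then closer to `L` than to `K`
  obtain ⟨p, hpL, hpK⟩ := exists_of_ssubset (SetLike.coe_ssubset_coe.2 hKL)
  have hr := (K.isCompact.isClosed.notMem_iff_infDist_pos K.nonempty).1 hpK
  set δ := min (infDist p K) 1 / 2 with hδ
  have hδr : 2 * δ ≤ infDist p K := by rw [hδ]; linarith [min_le_left (infDist p K) 1]
  have hδ1 : 2 * δ ≤ 1 := by rw [hδ]; linarith [min_le_right (infDist p K) 1]
  obtain ⟨n, hn⟩ := Metric.denseRange_iff.1 hy p δ (by positivity)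
  refine Summable.tsum_lt_tsum (i := n) (fun m => hanti m hKL.le) ?_ (hsum L) (hsum K)
  refine mul_lt_mul_of_pos_left ?_ (by positivity)
  have hL : infDist (y n) L < δ :=
    (infDist_le_dist_of_mem hpL).trans_lt (by rwa [dist_comm])
  have hK : infDist p K ≤ infDist (y n) K + dist p (y n) := infDist_le_infDist_add_dist
  exact (min_le_right _ _).trans_lt (hL.trans (lt_min (by linarith) (by linarith)))

end TopologicalSpace.NonemptyCompacts

section Reparam

variable {Y : Type*} [TopologicalSpace Y] [PartialOrder Y]

theorem exists_strictMono_reparam {K : I → Y} (hK : Continuous K) (hKm : Monotone K)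
    (h01 : K 0 ≠ K 1) {w : Y → ℝ} (hw : Continuous w) (hw' : StrictMono w) :
    ∃ α : I → Y, Continuous α ∧ StrictMono α ∧ α 0 = K 0 ∧ α 1 = K 1 ∧
      ∀ r, ∃ s, (r < 1 → s < 1) ∧ α r = K s := by
  have hc : 0 < w (K 1) - w (K 0) := sub_pos.2 (hw' ((hKm nonneg').lt_of_ne h01))
  set g : I → ℝ := fun t => (w (K t) - w (K 0)) / (w (K 1) - w (K 0))
  have hgm : Monotone g := fun s t hst =>
    div_le_div_of_nonneg_right (sub_le_sub_right (hw'.monotone (hKm hst)) _) hc.le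
  have hg0 : g 0 = 0 := by simp [g]
  have hg1 : g 1 = 1 := div_self hc.ne'
  set τ : C(I, I) :=
    ⟨fun t => ⟨g t, hg0 ▸ hgm nonneg', hg1 ▸ hgm le_one'⟩, by fun_prop⟩
  have hτ : Continuous τ := τ.continuous
  have hτ0 : τ 0 = 0 := Subtype.ext hg0
  have hτ1 : τ 1 = 1 := Subtype.ext hg1
  have hτ_surj : Function.Surjective τ := fun r => by
    have := intermediate_value_univ 0 1 hτ
    rw [hτ0, hτ1] at this
    exact this ⟨nonneg', le_one'⟩
  have hτK {s t : I} (h : K s = K t) : τ s = τ t := by simp [τ, g, h]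
  have hfib : Function.FactorsThrough (⟨K, hK⟩ : C(I, Y)) τ := fun s t hst => by
    have hweq : w (K s) = w (K t) := by
      simpa [τ, g, hc.ne', sub_left_inj] using congrArg Subtype.val hst
    rcases le_total s t with h | h
    · exact (hKm h).eq_of_not_lt fun hlt => (hw' hlt).ne hweq
    · exact ((hKm h).eq_of_not_lt fun hlt => (hw' hlt).ne hweq.symm).symm
  have hq := hτ.isClosedMap.isQuotientMap hτ hτ_surj
  set α := hq.lift _ hfib
  have hα (t : I) : α (τ t) = K t := DFunLike.congr_fun (hq.lift_comp _ hfib) t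
  refine ⟨α, α.continuous, fun r r' hrr' => ?_, by rw [← hα, hτ0], by rw [← hα, hτ1],
    fun r => ?_⟩
  · obtain ⟨s, rfl⟩ := hτ_surj r
    obtain ⟨s', rfl⟩ := hτ_surj r'
    rw [hα, hα]
    have hss' : s < s' := lt_of_not_ge fun h => hrr'.not_ge (hgm h)
    exact (hKm hss'.le).lt_of_ne fun h => hrr'.ne (hτK h)
  · obtain ⟨s, rfl⟩ := hτ_surj r
    exact ⟨s, fun hs => lt_of_le_of_ne le_one' (by rintro rfl; exact hs.ne hτ1), hα s⟩

end Reparam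

section Sweep

-- `sweepClock n t` rises from `0` to `1` while `1 - 2 / (n + 2) ≤ t ≤ 1 - 1 / (n + 2)`.
noncomputable def sweepClock (n : ℕ) (t : I) : I :=
  projIcc 0 1 zero_le_one (2 - (n + 2) * (1 - t))

@[fun_prop]
theorem continuous_sweepClock (n : ℕ) : Continuous (sweepClock n) :=
  continuous_projIcc.comp (by fun_prop)

theorem monotone_sweepClock (n : ℕ) : Monotone (sweepClock n) := fun s t hst =>
  monotone_projIcc _ (by have : (s : ℝ) ≤ t := hst; gcongr)

theorem sweepClock_zero (n : ℕ) : sweepClock n 0 = 0 :=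
  projIcc_of_le_left _ (by push_cast; linarith)

theorem eventually_sweepClock_eq_one (n : ℕ) : ∀ᶠ t in 𝓝 1, sweepClock n t = 1 := by
  have : Tendsto (fun t : I => 2 - (n + 2) * (1 - (t : ℝ))) (𝓝 1) (𝓝 2) := by
    simpa using ((continuous_subtype_val.tendsto (1 : I)).const_sub 1 |>.const_mul
      ((n : ℝ) + 2)).const_sub 2
  filter_upwards [this.eventually_const_le one_lt_two] with t ht
  exact projIcc_of_right_le _ ht

theorem eventually_sweepClock_eq_zero {b : I} (hb : b < 1) :
    ∀ᶠ n in atTop, sweepClock n b = 0 := by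
  have hb' : 0 < 1 - (b : ℝ) := sub_pos.2 hb
  obtain ⟨N, hN⟩ := exists_nat_ge (2 / (1 - (b : ℝ)))
  filter_upwards [eventually_ge_atTop N] with n hn
  refine projIcc_of_le_left _ ?_
  have : 2 ≤ (n : ℝ) * (1 - b) := by
    rw [div_le_iff₀ hb'] at hN
    nlinarith [(Nat.cast_le (α := ℝ)).2 hn]
  nlinarith

variable {X : Type*} [TopologicalSpace X] (γ : ℕ → C(I, X))

noncomputable def sweepSegment (n : ℕ) (t : I) : NonemptyCompacts X :=
  (⊤ : NonemptyCompacts I).map (fun s => γ n (min s (sweepClock n t))) (by fun_prop)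

theorem coe_sweepSegment (n : ℕ) (t : I) :
    (sweepSegment γ n t : Set X) = γ n '' Iic (sweepClock n t) := by
  simp only [sweepSegment, NonemptyCompacts.coe_map, NonemptyCompacts.coe_top, image_univ]
  ext z
  constructor
  · rintro ⟨s, rfl⟩
    exact ⟨min s _, mem_Iic.2 (min_le_right _ _), rfl⟩
  · rintro ⟨s, hs, rfl⟩
    exact ⟨s, congrArg (γ n) (min_eq_left hs)⟩

theorem continuous_sweepSegment (n : ℕ) : Continuous (sweepSegment γ n) :=
  continuous_const.nonemptyCompacts_map' (by fun_prop)

theorem monotone_sweepSegment (n : ℕ) : Monotone (sweepSegment γ n) := fun s t hst => by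
  rw [← SetLike.coe_subset_coe, coe_sweepSegment, coe_sweepSegment]
  exact image_mono (Iic_subset_Iic.2 (monotone_sweepClock n hst))

theorem apply_mem_sweepSegment {n : ℕ} {s t : I} (hs : s ≤ sweepClock n t) :
    γ n s ∈ sweepSegment γ n t := by
  rw [← SetLike.mem_coe, coe_sweepSegment]
  exact mem_image_of_mem _ hs

theorem coe_sweepSegment_of_sweepClock_eq_zero {n : ℕ} {t : I} (h : sweepClock n t = 0) :
    (sweepSegment γ n t : Set X) = {γ n 0} := by
  have hIic : Iic (0 : I) = {0} := Iic_bot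
  rw [coe_sweepSegment, h, hIic, image_singleton]

theorem isPreconnected_sweepSegment (n : ℕ) (t : I) :
    IsPreconnected (sweepSegment γ n t : Set X) := by
  rw [coe_sweepSegment]
  exact isPreconnected_Iic.image _ (γ n).continuous.continuousOn

noncomputable def partialSweep : ℕ → I → NonemptyCompacts X
  | 0 => sweepSegment γ 0
  | N + 1 => fun t => partialSweep N t ⊔ sweepSegment γ (N + 1) t

theorem coe_partialSweep (N : ℕ) (t : I) :
    (partialSweep γ N t : Set X) = ⋃ n ≤ N, (sweepSegment γ n t : Set X) := by
  induction N with
  | zero => simp [partialSweep]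
  | succ N ih => rw [Set.biUnion_le_succ, ← ih]; rfl

theorem continuous_partialSweep (N : ℕ) : Continuous (partialSweep γ N) := by
  induction N with
  | zero => exact continuous_sweepSegment γ 0
  | succ N ih => exact ih.sup (continuous_sweepSegment γ _)

variable [CompactSpace X]

noncomputable def sweep (t : I) : NonemptyCompacts X :=
  ⟨⟨closure (⋃ n, (sweepSegment γ n t : Set X)), isClosed_closure.isCompact⟩,
    (sweepSegment γ 0 t).nonempty.mono
      (subset_closure.trans' (subset_iUnion_of_subset 0 le_rfl))⟩

theorem coe_sweep (t : I) :
    (sweep γ t : Set X) = closure (⋃ n, (sweepSegment γ n t : Set X)) := rfl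

theorem monotone_sweep : Monotone (sweep γ) := fun _ _ hst =>
  closure_mono (iUnion_mono fun n => monotone_sweepSegment γ n hst)

variable {γ} {x : X}

theorem isConnected_sweep (hγ0 : ∀ n, γ n 0 = x) (t : I) : IsConnected (sweep γ t : Set X) :=
  ⟨(sweep γ t).nonempty, (isPreconnected_iUnion
    ⟨x, mem_iInter.2 fun n => hγ0 n ▸ apply_mem_sweepSegment γ nonneg'⟩
    (isPreconnected_sweepSegment γ · t)).closure⟩

theorem sweep_zero [T1Space X] (hγ0 : ∀ n, γ n 0 = x) : sweep γ 0 = {x} := by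
  apply NonemptyCompacts.ext
  simp [coe_sweep, coe_sweepSegment_of_sweepClock_eq_zero, sweepClock_zero, hγ0]

theorem sweep_eq_partialSweep [T2Space X] (hγ0 : ∀ n, γ n 0 = x) {N : ℕ} {b t : I}
    (hN : ∀ n ≥ N, sweepClock n b = 0) (htb : t ≤ b) : sweep γ t = partialSweep γ N t := by
  have hunion : ⋃ n, (sweepSegment γ n t : Set X) = partialSweep γ N t := by
    rw [coe_partialSweep]
    refine (iUnion_subset fun n => ?_).antisymm
      (iUnion₂_subset fun n _ => subset_iUnion_of_subset n le_rfl)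
    rcases le_or_gt n N with hn | hn
    · exact subset_biUnion_of_mem (u := fun n => (sweepSegment γ n t : Set X)) hn
    -- the paths with index beyond `N` have not started by time `b`
    have h0 : sweepClock n t = 0 :=
      le_antisymm ((monotone_sweepClock n htb).trans (hN n hn.le).le) nonneg'
    rw [coe_sweepSegment_of_sweepClock_eq_zero γ h0, singleton_subset_iff, hγ0, ← hγ0 0]
    exact mem_biUnion (Nat.zero_le N) (apply_mem_sweepSegment γ nonneg')
  apply NonemptyCompacts.ext
  rw [coe_sweep, hunion, (partialSweep γ N t).isCompact.isClosed.closure_eq]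

theorem continuousAt_sweep [T2Space X] (hγ0 : ∀ n, γ n 0 = x) {t : I} (ht : t < 1) :
    ContinuousAt (sweep γ) t := by
  obtain ⟨b, htb, hb⟩ := exists_between ht
  obtain ⟨N, hN⟩ := (eventually_sweepClock_eq_zero hb).exists_forall_of_atTop
  refine (continuous_partialSweep γ N).continuousAt.congr ?_
  filter_upwards [Iio_mem_nhds htb] with s hs
  exact (sweep_eq_partialSweep hγ0 hN hs.le).symm

theorem sweep_subset_iUnion_range [T2Space X] (hγ0 : ∀ n, γ n 0 = x) {t : I} (ht : t < 1) :
    (sweep γ t : Set X) ⊆ ⋃ n, range (γ n) := by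
  obtain ⟨N, hN⟩ := (eventually_sweepClock_eq_zero ht).exists_forall_of_atTop
  rw [sweep_eq_partialSweep hγ0 hN le_rfl, coe_partialSweep]
  exact iUnion₂_subset fun n _ => (coe_sweepSegment γ n t).trans_subset
    ((image_subset_range _ _).trans (subset_iUnion_of_subset n le_rfl))

variable [Nonempty X]

theorem sweep_one (hdense : Dense (⋃ n, range (γ n))) : sweep γ 1 = ⊤ := by
  apply NonemptyCompacts.ext
  rw [coe_sweep, NonemptyCompacts.coe_top, ← hdense.closure_eq]
  have hIic : Iic (1 : I) = univ := Iic_top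
  simp only [coe_sweepSegment, (eventually_sweepClock_eq_one _).self_of_nhds, hIic, image_univ]

theorem tendsto_sweep_one (hdense : Dense (⋃ n, range (γ n))) :
    Tendsto (sweep γ) (𝓝 1) (𝓝 ⊤) := by
  refine NonemptyCompacts.tendsto_nhds_top_iff.2 fun U hU hUne => ?_
  obtain ⟨z, hzU, hz⟩ := hdense.inter_open_nonempty U hU hUne
  obtain ⟨n, s, rfl⟩ := mem_iUnion.1 hz
  filter_upwards [eventually_sweepClock_eq_one n] with t ht
  exact ⟨γ n s, subset_closure (mem_iUnion_of_mem n
    (apply_mem_sweepSegment γ (ht ▸ le_one'))), hzU⟩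

theorem continuous_sweep [T2Space X] (hγ0 : ∀ n, γ n 0 = x)
    (hdense : Dense (⋃ n, range (γ n))) : Continuous (sweep γ) := by
  refine continuous_iff_continuousAt.2 fun t => ?_
  rcases (le_one' (t := t)).lt_or_eq with ht | rfl
  · exact continuousAt_sweep hγ0 ht
  · rw [ContinuousAt, sweep_one hdense]
    exact tendsto_sweep_one hdense

end Sweep

section Dendroid

variable {X : Type*} [MetricSpace X]

theorem ArcIn.mono {S T : Set X} {a b : X} (h : ArcIn S a b) (hST : S ⊆ T) : ArcIn T a b :=
  h.imp id fun ⟨f, hf, hinj, h0, h1, hfS⟩ => ⟨f, hf, hinj, h0, h1, fun t => hST (hfS t)⟩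

theorem ArcIn.joinedIn {S : Set X} {a b : X} (h : ArcIn S a b) (ha : a ∈ S) : JoinedIn S a b := by
  rcases h with rfl | ⟨f, hf, -, rfl, rfl, hfS⟩
  · exact JoinedIn.refl ha
  · exact ⟨⟨⟨f, hf⟩, rfl, rfl⟩, hfS⟩

theorem IsOrderArc.monotone {α : I → NonemptyCompacts X} (hα : IsOrderArc α) :
    Monotone fun t => (α t : Set X) := fun s t hst =>
  hst.eq_or_lt.elim (fun h => h ▸ subset_rfl) fun h => (hα.2.2 s t h).subset

theorem IsNonBlocker.interior_eq_empty {A : Set X} (hA : IsNonBlocker A) : interior A = ∅ := by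
  obtain ⟨-, -, hAuniv, harc⟩ := hA
  obtain ⟨x, hx⟩ := ne_univ_iff_exists_notMem A |>.1 hAuniv
  obtain ⟨α, hα, -, hα1, hαA⟩ := harc x hx
  by_contra hne
  have hmeets : ∀ᶠ t in 𝓝[<] 1, ((α t : Set X) ∩ interior A).Nonempty :=
    (NonemptyCompacts.eventually_inter_nonempty (hα.1.tendsto 1) isOpen_interior
      (by simpa [hα1, nonempty_iff_ne_empty])).filter_mono nhdsWithin_le_nhds
  obtain ⟨t, ⟨z, hzα, hzA⟩, ht⟩ := (hmeets.and self_mem_nhdsWithin).exists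
  exact (hαA t ht).subset ⟨hzα, interior_subset hzA⟩

variable [CompactSpace X] [ConnectedSpace X] [Nonempty X]

theorem IsDendroid.arcIn (hX : IsDendroid X) {K : Set X} (hK : IsCompact K)
    (hKconn : IsConnected K) {a b : X} (ha : a ∈ K) (hb : b ∈ K) : ArcIn K a b := by
  rcases hX.1 a (mem_univ a) b (mem_univ b) with rfl | ⟨f, hf, hinj, rfl, rfl, -⟩
  · exact Or.inl rfl
  have hfK : IsConnected (K ∩ range f) := hX.2 _ (hK.union (isCompact_range hf))
    (hKconn.union ⟨f 0, ha, mem_range_self 0⟩ (isConnected_range hf)) K (range f) hK hKconn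
    (isCompact_range hf) (isConnected_range hf) rfl
  have hpre : IsPreconnected (f ⁻¹' K) := by
    rw [← (hf.isClosedEmbedding hinj).isInducing.isPreconnected_image,
      image_preimage_eq_inter_range]
    exact hfK.isPreconnected
  exact Or.inr ⟨f, hf, hinj, rfl, rfl, fun t => hpre.Icc_subset ha hb ⟨t.2.1, t.2.2⟩⟩

theorem IsStrongCenter.exists_lt_one_mem (hX : IsDendroid X) [Nontrivial X] {p : X}
    (hp : IsStrongCenter p) {γ : I → NonemptyCompacts X} (hγ : Continuous γ)
    (hconn : ∀ t, IsConnected (γ t : Set X)) (h1 : (γ 1 : Set X) = univ) :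
    ∃ t < 1, p ∈ (γ t : Set X) := by
  obtain ⟨U, V, hU, hV, hUne, hVne, hUV⟩ := hp
  obtain ⟨u, hu, v, hv, huv⟩ := exists_mem_mem_ne hU hUne hVne
  obtain ⟨U', V', hU', hV', huU', hvV', hdisj⟩ := t2_separation huv
  have hmeets : ∀ W : Set X, IsOpen W → W.Nonempty →
      ∀ᶠ t in 𝓝[<] 1, ((γ t : Set X) ∩ W).Nonempty :=
    fun W hW hWne => (NonemptyCompacts.eventually_inter_nonempty (hγ.tendsto 1) hW
      (by rwa [h1, univ_inter])).filter_mono nhdsWithin_le_nhds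
  obtain ⟨t, ⟨⟨a, haγ, haU, haU'⟩, ⟨b, hbγ, hbV, hbV'⟩⟩, ht⟩ :=
    ((hmeets _ (hU.inter hU') ⟨u, hu, huU'⟩).and (hmeets _ (hV.inter hV') ⟨v, hv, hvV'⟩)
      |>.and self_mem_nhdsWithin).exists
  rcases hX.arcIn (γ t).isCompact (hconn t) haγ hbγ with rfl | ⟨f, hf, hinj, rfl, rfl, hfγ⟩
  · exact absurd hdisj (not_disjoint_iff.2 ⟨_, haU', hbV'⟩)
  obtain ⟨s, rfl⟩ := hUV f hf hinj haU hbV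
  exact ⟨t, ht, hfγ s⟩

theorem IsNonBlocker.exists_isConnected_mem_subset_compl (hX : IsDendroid X) {p : X}
    (hp : IsStrongCenter p) {A : Set X} (hA : IsNonBlocker A) {x : X} (hx : x ∉ A) :
    ∃ K : Set X, IsCompact K ∧ IsConnected K ∧ x ∈ K ∧ p ∈ K ∧ K ⊆ Aᶜ := by
  obtain ⟨a, ha⟩ := hA.2.1
  have : Nontrivial X := ⟨a, x, ne_of_mem_of_not_mem ha hx⟩
  obtain ⟨α, hα, hα0, hα1, hαA⟩ := hA.2.2.2 x hx
  obtain ⟨t, ht, hpt⟩ := hp.exists_lt_one_mem hX hα.1 hα.2.1 hα1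
  refine ⟨α t, (α t).isCompact, hα.2.1 t, hα.monotone nonneg' (by simp [hα0]), hpt, ?_⟩
  exact fun z hz hzA => (hαA t ht).subset ⟨hz, hzA⟩

theorem IsNonBlocker.isArcwiseConnected_compl (hX : IsDendroid X) {p : X} (hp : IsStrongCenter p)
    {A : Set X} (hA : IsNonBlocker A) : IsArcwiseConnected Aᶜ := by
  intro x hx y hy
  obtain ⟨K, hK, hKconn, hxK, hpK, hKA⟩ := hA.exists_isConnected_mem_subset_compl hX hp hx
  obtain ⟨L, hL, hLconn, hyL, hpL, hLA⟩ := hA.exists_isConnected_mem_subset_compl hX hp hy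
  exact (hX.arcIn (hK.union hL) (hKconn.union ⟨p, hpK, hpL⟩ hLconn) (Or.inl hxK)
    (Or.inr hyL)).mono (union_subset hKA hLA)

end Dendroid

theorem isNonBlocker_of_interior_eq_empty {X : Type*} [MetricSpace X] [CompactSpace X]
    {A : Set X} (hA : IsClosed A) (hAne : A.Nonempty) (hint : interior A = ∅)
    (harc : IsArcwiseConnected Aᶜ) :
    IsNonBlocker A := by
  obtain ⟨a, ha⟩ := hAne
  have : Nonempty X := ⟨a⟩
  refine ⟨hA, ⟨a, ha⟩, fun h => by simp [h] at hint, fun x hx => ?_⟩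
  obtain ⟨y, hy, hyA⟩ := (interior_eq_empty_iff_dense_compl.1 hint).exists_denseRange_forall_mem
  have hjoin n : JoinedIn Aᶜ x (y n) := (harc x hx (y n) (hyA n)).joinedIn hx
  set γ : ℕ → C(I, X) := fun n => (hjoin n).somePath
  have hγ0 n : γ n 0 = x := (hjoin n).somePath.source
  have hγA : ⋃ n, range (γ n) ⊆ Aᶜ :=
    iUnion_subset fun n => range_subset_iff.2 (hjoin n).somePath_mem
  have hdense : Dense (⋃ n, range (γ n)) :=
    hy.mono (range_subset_iff.2 fun n => mem_iUnion_of_mem n ⟨1, (hjoin n).somePath.target⟩)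
  have h01 : sweep γ 0 ≠ sweep γ 1 := by
    rw [sweep_zero hγ0, sweep_one hdense]
    intro h
    have hax : a ∈ (⊤ : NonemptyCompacts X) := by
      rw [← SetLike.mem_coe, NonemptyCompacts.coe_top]
      trivial
    rw [← h, NonemptyCompacts.mem_singleton] at hax
    exact hx (hax ▸ ha)
  obtain ⟨w, hw, hw'⟩ := NonemptyCompacts.exists_continuous_strictMono_s12 (X := X)
  obtain ⟨α, hα, hαm, hα0, hα1, hαK⟩ :=
    exists_strictMono_reparam (continuous_sweep hγ0 hdense) (monotone_sweep γ) h01 hw hw'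
  refine ⟨α, ⟨hα, fun r => ?_, fun s t hst => SetLike.coe_ssubset_coe.2 (hαm hst)⟩,
    by rw [hα0, sweep_zero hγ0]; rfl, by rw [hα1, sweep_one hdense, NonemptyCompacts.coe_top],
    fun r hr => ?_⟩
  · obtain ⟨s, -, hs⟩ := hαK r
    exact hs ▸ isConnected_sweep hγ0 s
  · obtain ⟨s, hs1, hs⟩ := hαK r
    rw [hs, ← disjoint_iff_inter_eq_empty, ← subset_compl_iff_disjoint_right]
    exact (sweep_subset_iUnion_range hγ0 (hs1 hr)).trans hγA

theorem dendroid_strong_center_connected_nonblocker_iff (hX : IsDendroid X)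
    (hsc : ∃ p : X, IsStrongCenter p) (A : Set X)
    (hAc : IsCompact A) (hAconn : IsConnected A) :
    IsNonBlocker A ↔ interior A = ∅ ∧ IsArcwiseConnected Aᶜ := by
  obtain ⟨p, hp⟩ := hsc
  exact ⟨fun hA => ⟨hA.interior_eq_empty, hA.isArcwiseConnected_compl hX hp⟩,
    fun ⟨hint, harc⟩ =>
      isNonBlocker_of_interior_eq_empty hAc.isClosed hAconn.nonempty hint harc⟩
end
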